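/- Let D be the clone of idempotent self-dual Boolean functions (equivalently, the clone generated by the ternary discriminator on {0,1}). For Boolean functions f, g: f ≤_D g if and only if f(0,...,0) = g(0,...,0), f(1,...,1) = g(1,...,1), and Im^[2](f) ⊆ Im^[2](g). There are exactly 16 D-equivalence classes of Boolean functions. -/

import Mathlib

/-- An `n`-indexed operation on `A` has arity `n + 1` (so arities are ≥ 1). -/
abbrev Op (A : Type) (n : ℕ) := (Fin (n + 1) → A) → A

/-- A clone on `A`: a set of finitary operations containing all projections
and closed under composition. -/
structure Clone (A : Type) where
  ops : ∀ n : ℕ, Set (Op A n)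
  proj_mem : ∀ (n : ℕ) (i : Fin (n + 1)), (fun x => x i) ∈ ops n
  comp_mem : ∀ {m n : ℕ} (g : Op A m) (h : Fin (m + 1) → Op A n),
      g ∈ ops m → (∀ i, h i ∈ ops n) → (fun x => g fun i => h i x) ∈ ops n

/-- The set `O_A` of all finitary operations on `A`, of all arities. -/
def Ops (A : Type) := Σ n : ℕ, Op A n

/-- `Minor C f g` : `f` is a `C`-minor of `g`, i.e. `f = g ∘ h` for a tuple `h`
of operations from `C`. -/
def Minor {A : Type} (C : Clone A) (f g : Ops A) : Prop :=
  ∃ h : Fin (g.1 + 1) → Op A f.1,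
    (∀ i, h i ∈ C.ops f.1) ∧ f.2 = fun x => g.2 fun i => h i x

/-- `C`-equivalence: each of `f`, `g` is a `C`-minor of the other. -/
def CEquiv {A : Type} (C : Clone A) (f g : Ops A) : Prop :=
  Minor C f g ∧ Minor C g f

/-- `Im^[2](f)`: the collection of sets `{f(a), f(ā)}` where `ā` is the
componentwise complement of `a`. -/
def Im2 (f : Ops (Fin 2)) : Set (Set (Fin 2)) :=
  {s | ∃ a : Fin (f.1 + 1) → Fin 2, s = {f.2 a, f.2 (fun i => a i + 1)}}

/-!
A tuple `h` of idempotent self-dual functions is the same as a map `H` on argument tuples that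
fixes the two constant tuples and commutes with complementation. Hence `g ∘ H` has the same
values as `g` on the constants, and each pair `{g (H a), g (H ā)}` already lies in `Im^[2](g)`.
Conversely, if `f` and `g` agree on the constants and `Im^[2](f) ⊆ Im^[2](g)`, choose for every
`a` a tuple `B a` with `g (B a) = f a` and `g (B a + 1) = f ā`, with `B 0 = 0`. Using `B` on the
tuples with first coordinate `0` and `x ↦ B x̄ + 1` on the others gives a self-dual `H`.

So the class of `f` is determined by `(f 0, f 1, Im^[2](f))`, and the triples that occur are
exactly those with `{f 0, f 1} ∈ Im^[2](f)`. For each of the four choices of `(f 0, f 1)`, the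
two other pairs may occur or not, which gives `4 · 4 = 16` classes.
-/

def IsIdemSelfDual {α β : Type*} [Zero α] [One α] [Add α] [Zero β] [One β] [Add β]
    (H : α → β) : Prop :=
  H 0 = 0 ∧ H 1 = 1 ∧ ∀ x, H (x + 1) = H x + 1

theorem isIdemSelfDual_pi_iff {α ι β : Type*} [Zero α] [One α] [Add α] [Zero β] [One β]
    [Add β] {H : α → ι → β} :
    IsIdemSelfDual H ↔ ∀ i, IsIdemSelfDual fun x => H x i := by
  simp only [IsIdemSelfDual, funext_iff, Pi.zero_apply, Pi.one_apply, Pi.add_apply, forall_and]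
  rw [forall_comm (α := α)]

theorem Fin.pi_add_one_add_one {ι : Type*} (a : ι → Fin 2) : a + 1 + 1 = a :=
  funext fun i => show a i + 1 + 1 = a i by generalize a i = x; revert x; decide

section SelfDualExtension

variable {ι κ β : Type*}

def selfDualExtension (i₀ : ι) (B : (ι → Fin 2) → κ → Fin 2) (a : ι → Fin 2) :
    κ → Fin 2 :=
  if a i₀ = 0 then B a else B (a + 1) + 1

theorem isIdemSelfDual_selfDualExtension (i₀ : ι) {B : (ι → Fin 2) → κ → Fin 2}
    (hB : B 0 = 0) : IsIdemSelfDual (selfDualExtension i₀ B) := by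
  refine ⟨if_pos rfl |>.trans hB, ?_, fun x => ?_⟩
  · have h11 : (1 : ι → Fin 2) + 1 = 0 := Fin.pi_add_one_add_one 0
    simp [selfDualExtension, h11, hB]
  · have hx : x i₀ = 0 ∨ x i₀ = 1 := by generalize x i₀ = y; revert y; decide
    rcases hx with hx | hx <;> simp [selfDualExtension, hx, Fin.pi_add_one_add_one]

theorem comp_selfDualExtension (i₀ : ι) {φ : (ι → Fin 2) → β} {ψ : (κ → Fin 2) → β}
    {B : (ι → Fin 2) → κ → Fin 2}
    (hB : ∀ a, ψ (B a) = φ a ∧ ψ (B a + 1) = φ (a + 1)) :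
    ψ ∘ selfDualExtension i₀ B = φ := by
  funext a
  by_cases ha : a i₀ = 0
  · simp [selfDualExtension, ha, hB]
  · simp [selfDualExtension, ha, hB, Fin.pi_add_one_add_one]

theorem exists_isIdemSelfDual_comp_eq_iff [Nonempty ι] (φ : (ι → Fin 2) → β)
    (ψ : (κ → Fin 2) → β) :
    (∃ H : (ι → Fin 2) → κ → Fin 2, IsIdemSelfDual H ∧ φ = ψ ∘ H) ↔
      φ 0 = ψ 0 ∧ φ 1 = ψ 1 ∧ ∀ a, ∃ b, s(ψ b, ψ (b + 1)) = s(φ a, φ (a + 1)) := by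
  constructor
  · rintro ⟨H, ⟨h0, h1, hcompl⟩, rfl⟩
    exact ⟨by simp [h0], by simp [h1], fun a => ⟨H a, by simp [hcompl]⟩⟩
  rintro ⟨h0, h1, hpairs⟩
  have hlift : ∀ a, ∃ b, ψ b = φ a ∧ ψ (b + 1) = φ (a + 1) := fun a => by
    obtain ⟨b, hb⟩ := hpairs a
    rcases Sym2.eq_iff.1 hb with ⟨hb, hb'⟩ | ⟨hb, hb'⟩
    · exact ⟨b, hb, hb'⟩
    · exact ⟨b + 1, hb', by rwa [Fin.pi_add_one_add_one]⟩
  choose B hB using hlift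
  classical
  have hB₀ : ∀ a, ψ (Function.update B 0 0 a) = φ a ∧
      ψ (Function.update B 0 0 a + 1) = φ (a + 1) := fun a => by
    by_cases ha : a = 0
    · simp [ha, h0, h1]
    · simp [ha, hB]
  obtain ⟨i₀⟩ := ‹Nonempty ι›
  exact ⟨selfDualExtension i₀ (Function.update B 0 0),
    isIdemSelfDual_selfDualExtension i₀ (by simp), (comp_selfDualExtension i₀ hB₀).symm⟩

end SelfDualExtension

theorem minor_iff_exists_isIdemSelfDual {D : Clone (Fin 2)}
    (hD : ∀ n, D.ops n = {h | IsIdemSelfDual h}) {f g : Ops (Fin 2)} :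
    Minor D f g ↔
      ∃ H : (Fin (f.1 + 1) → Fin 2) → Fin (g.1 + 1) → Fin 2,
        IsIdemSelfDual H ∧ f.2 = g.2 ∘ H := by
  simp only [Minor, hD, Set.mem_ofPred_eq]
  constructor
  · rintro ⟨h, hh, hf⟩
    exact ⟨fun x i => h i x, isIdemSelfDual_pi_iff.2 hh, hf⟩
  · rintro ⟨H, hH, hf⟩
    exact ⟨fun i x => H x i, isIdemSelfDual_pi_iff.1 hH, hf⟩

theorem im2_subset_im2_iff {f g : Ops (Fin 2)} :
    Im2 f ⊆ Im2 g ↔ ∀ a, ∃ b, s(g.2 b, g.2 (b + 1)) = s(f.2 a, f.2 (a + 1)) := by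
  constructor
  · intro h a
    obtain ⟨b, hb⟩ := h ⟨a, rfl⟩
    exact ⟨b, Sym2.eq_iff.2 (Set.pair_eq_pair_iff.1 hb.symm)⟩
  · rintro h _ ⟨a, rfl⟩
    obtain ⟨b, hb⟩ := h a
    exact ⟨b, Set.pair_eq_pair_iff.2 (Sym2.eq_iff.1 hb.symm)⟩

theorem minor_iff {D : Clone (Fin 2)} (hD : ∀ n, D.ops n = {h | IsIdemSelfDual h})
    (f g : Ops (Fin 2)) :
    Minor D f g ↔ f.2 0 = g.2 0 ∧ f.2 1 = g.2 1 ∧ Im2 f ⊆ Im2 g := by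
  rw [minor_iff_exists_isIdemSelfDual hD, exists_isIdemSelfDual_comp_eq_iff, im2_subset_im2_iff]

def symImage (f : Ops (Fin 2)) : Finset (Sym2 (Fin 2)) :=
  Finset.univ.image fun a => s(f.2 a, f.2 (a + 1))

theorem symImage_subset_symImage_iff {f g : Ops (Fin 2)} :
    symImage f ⊆ symImage g ↔ ∀ a, ∃ b, s(g.2 b, g.2 (b + 1)) = s(f.2 a, f.2 (a + 1)) := by
  simp [symImage, Finset.image_subset_iff]

theorem mk_mem_symImage (f : Ops (Fin 2)) : s(f.2 0, f.2 1) ∈ symImage f :=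
  Finset.mem_image.2 ⟨0, Finset.mem_univ _, by rw [zero_add]⟩

/- `Im^[2]` is recorded as a finset of unordered pairs, so that the classes can be counted by
evaluation. -/
abbrev ClassData := Fin 2 × Fin 2 × Finset (Sym2 (Fin 2))

def classData (f : Ops (Fin 2)) : ClassData := (f.2 0, f.2 1, symImage f)

theorem cequiv_iff {D : Clone (Fin 2)} (hD : ∀ n, D.ops n = {h | IsIdemSelfDual h})
    (f g : Ops (Fin 2)) : CEquiv D f g ↔ classData f = classData g := by
  simp only [CEquiv, minor_iff hD, im2_subset_im2_iff, ← symImage_subset_symImage_iff,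
    classData, Prod.mk.injEq, Finset.Subset.antisymm_iff]
  constructor
  · rintro ⟨⟨h0, h1, hfg⟩, -, -, hgf⟩
    exact ⟨h0, h1, hfg, hgf⟩
  · rintro ⟨h0, h1, hfg, hgf⟩
    exact ⟨⟨h0, h1, hfg⟩, h0.symm, h1.symm, hgf⟩

/- The eight ternary tuples form four complementary pairs, each represented by its member with
first coordinate `0`. The constant pair is sent to `(a, b)`, each other pair to one of the three
unordered pairs if that lies in `S`, and to `(a, b)` otherwise. -/
def classWitness (a b : Fin 2) (S : Finset (Sym2 (Fin 2))) : Op (Fin 2) 2 := fun x =>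
  let keep (p : Fin 2 × Fin 2) := if s(p.1, p.2) ∈ S then p else (a, b)
  let r := if x 0 = 0 then x else x + 1
  let p := if r 1 = 0 then (if r 2 = 0 then (a, b) else keep (0, 0))
    else if r 2 = 0 then keep (1, 1) else keep (0, 1)
  if x 0 = 0 then p.1 else p.2

theorem classData_classWitness :
    ∀ t : ClassData, s(t.1, t.2.1) ∈ t.2.2 →
      classData ⟨2, classWitness t.1 t.2.1 t.2.2⟩ = t := by
  decide

def classEquiv {D : Clone (Fin 2)} (hD : ∀ n, D.ops n = {h | IsIdemSelfDual h}) :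
    Quot (CEquiv D) ≃ {t : ClassData // s(t.1, t.2.1) ∈ t.2.2} where
  toFun := Quot.lift (fun f => ⟨classData f, mk_mem_symImage f⟩)
    fun f g hfg => Subtype.ext ((cequiv_iff hD f g).1 hfg)
  invFun t := Quot.mk _ ⟨2, classWitness t.1.1 t.1.2.1 t.1.2.2⟩
  left_inv := Quot.ind fun f =>
    Quot.sound ((cequiv_iff hD _ _).2 (classData_classWitness _ (mk_mem_symImage f)))
  right_inv t := Subtype.ext (classData_classWitness t.1 t.2)

theorem D_minor_description {D : Clone (Fin 2)}
    (hD : ∀ n, D.ops n =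
      {f : Op (Fin 2) n | f (fun _ => 0) = 0 ∧ f (fun _ => 1) = 1 ∧
        ∀ x, f (fun i => x i + 1) = f x + 1}) :
    (∀ f g : Ops (Fin 2), Minor D f g ↔
      (f.2 (fun _ => 0) = g.2 (fun _ => 0) ∧ f.2 (fun _ => 1) = g.2 (fun _ => 1) ∧
        Im2 f ⊆ Im2 g)) ∧
    Nat.card (Quot (CEquiv D)) = 16 := by
  refine ⟨minor_iff hD, ?_⟩
  rw [Nat.card_congr (classEquiv hD), Nat.card_eq_fintype_card]
  decide
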